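/- Let γ ∈ [0,2) and let b be the γ-anti-tree over (X, m) with counting measure m ≡ 1, intrinsic degree path metric ρ, and combinatorial balls A_k := S₀ ∪ … ∪ S_k. Then there exists C ≥ 1 such that for all k ≥ 1: C⁻¹ · k^{3γ/2} ≤ (bρ)(∂A_k) ≤ C · k^{3γ/2}, where ∂A_k := {(x,y) ∈ (A_k × (X∖A_k)) ∪ ((X∖A_k) × A_k) : b(x,y) > 0} and (bρ)(∂A_k) := Σ_{(x,y)∈∂A_k} b(x,y) ρ(x,y). -/

import Mathlib

/-!
Only edges between the spheres `S_k` and `S_{k+1}` cross `∂A_k`, and there are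
`2 s_k s_{k+1} ≍ k^{2γ}` such ordered pairs. Their endpoints have degree `≍ k^γ`, so a single
edge has length `≍ k^{-γ/2}`; since every path between the endpoints of a boundary pair must
itself cross from `S_k` to `S_{k+1}`, this is also the order of `ρ` on `∂A_k`. Hence
`(bρ)(∂A_k) ≍ k^{2γ} · k^{-γ/2} = k^{3γ/2}`.
-/

open scoped BigOperators

/-- Vertex set of the anti-tree with sphere function `s`:
the `k`-th sphere has `s k` elements. -/
def AntiTree (s : ℕ → ℕ) : Type := Σ k : ℕ, Fin (s k)

namespace AntiTree

/-- Standard edge weights of the anti-tree: consecutive spheres are completely connected,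
and there are no other edges. -/
def wt (s : ℕ → ℕ) (x y : AntiTree s) : ℝ :=
  if x.1 + 1 = y.1 ∨ y.1 + 1 = x.1 then 1 else 0

/-- Weighted vertex degree with respect to the counting measure `m ≡ 1`. -/
noncomputable def Deg (s : ℕ → ℕ) (x : AntiTree s) : ℝ := ∑' y : AntiTree s, wt s x y

end AntiTree

/-- Intrinsic degree path (pseudo-)metric of a weighted graph `b` whose weighted degree
function is `D`:  `ρ(x,y)` is the infimum over finite paths from `x` to `y` of
`∑_j min(1/D(x_j), 1/D(x_{j+1}))^{1/2}`. -/
noncomputable def pathMetric {X : Type*} (b : X → X → ℝ) (D : X → ℝ) (x y : X) : ℝ :=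
  sInf { L : ℝ | ∃ (k : ℕ) (p : ℕ → X), p 0 = x ∧ p k = y ∧
    (∀ j < k, 0 < b (p j) (p (j + 1))) ∧
    L = ∑ j ∈ Finset.range k, Real.sqrt (min (1 / D (p j)) (1 / D (p (j + 1)))) }

/-- The intrinsic degree path metric of the anti-tree. -/
noncomputable def AntiTree.rho (s : ℕ → ℕ) : AntiTree s → AntiTree s → ℝ :=
  pathMetric (AntiTree.wt s) (AntiTree.Deg s)

/-- Closed balls with respect to the intrinsic degree path metric. -/
noncomputable def AntiTree.ball (s : ℕ → ℕ) (x : AntiTree s) (r : ℝ) : Set (AntiTree s) :=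
  {y | AntiTree.rho s x y ≤ r}

/-- The sphere function of the `γ`-anti-tree: `s (k-1) = ⌊k ^ γ⌋` for `k ≥ 1`,
i.e. `s k = ⌊(k+1) ^ γ⌋`. -/
noncomputable def gammaSphere (γ : ℝ) : ℕ → ℕ := fun k => ⌊((k : ℝ) + 1) ^ γ⌋₊
/-- `(bρ)(∂W)`: the weighted boundary measure of a set `W`, i.e. the sum of
`b(x,y) ρ(x,y)` over all ordered pairs with exactly one of `x,y` in `W`. -/
noncomputable def boundarySum {X : Type*} (b ρ : X → X → ℝ) (W : Set X) : ℝ :=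
  ∑' p : X × X,
    Set.indicator {q : X × X | (q.1 ∈ W ∧ q.2 ∉ W) ∨ (q.1 ∉ W ∧ q.2 ∈ W)}
      (fun q => b q.1 q.2 * ρ q.1 q.2) p

/-- The isoperimetric constant `h_{U,n}`: the infimum of `(bρ)(∂W) / m(W)^{(n-2)/n}`
over finite nonempty subsets `W ⊆ U`. -/
noncomputable def isoConst {X : Type*} (b ρ : X → X → ℝ) (m : X → ℝ) (U : Set X) (n : ℝ) : ℝ :=
  sInf { h : ℝ | ∃ W : Finset X, ↑W ⊆ U ∧ W.Nonempty ∧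
    h = boundarySum b ρ ↑W / (∑ x ∈ W, m x) ^ ((n - 2) / n) }

open Finset

lemma exists_step_crossing {X : Type*} (W : Set X) (p : ℕ → X) :
    ∀ {K : ℕ}, (p 0 ∈ W ↔ p K ∉ W) → ∃ j < K, (p j ∈ W ↔ p (j + 1) ∉ W)
  | 0, h => absurd h (by tauto)
  | K + 1, h => by
    by_cases hK : p K ∈ W ↔ p (K + 1) ∉ W
    · exact ⟨K, K.lt_succ_self, hK⟩
    · obtain ⟨j, hj, hcross⟩ := exists_step_crossing W p (K := K) (by tauto)
      exact ⟨j, hj.trans K.lt_succ_self, hcross⟩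

section PathMetric

variable {X : Type*} {b : X → X → ℝ} {D : X → ℝ} {x y : X}

/-- The set whose infimum defines `pathMetric b D x y`. -/
def pathLengths (b : X → X → ℝ) (D : X → ℝ) (x y : X) : Set ℝ :=
  { L : ℝ | ∃ (k : ℕ) (p : ℕ → X), p 0 = x ∧ p k = y ∧
    (∀ j < k, 0 < b (p j) (p (j + 1))) ∧
    L = ∑ j ∈ Finset.range k, Real.sqrt (min (1 / D (p j)) (1 / D (p (j + 1)))) }

lemma nonneg_of_mem_pathLengths {L : ℝ} (hL : L ∈ pathLengths b D x y) : 0 ≤ L := by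
  obtain ⟨k, p, -, -, -, rfl⟩ := hL
  exact sum_nonneg fun j _ => Real.sqrt_nonneg _

lemma step_mem_pathLengths (hxy : 0 < b x y) :
    √(min (1 / D x) (1 / D y)) ∈ pathLengths b D x y := by
  refine ⟨1, fun j => if j = 0 then x else y, by simp, by simp, ?_, by simp⟩
  intro j hj
  obtain rfl : j = 0 := by omega
  simpa using hxy

lemma pathMetric_le_of_pos (hxy : 0 < b x y) :
    pathMetric b D x y ≤ √(min (1 / D x) (1 / D y)) :=
  csInf_le ⟨0, fun _ => nonneg_of_mem_pathLengths⟩ (step_mem_pathLengths hxy)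

/-- Every path from `W` to its complement contains an edge of `∂W`. -/
lemma le_pathMetric_of_forall_boundary (W : Set X) {c : ℝ}
    (hc : ∀ z w, 0 < b z w → (z ∈ W ↔ w ∉ W) → c ≤ √(min (1 / D z) (1 / D w)))
    (hxy : 0 < b x y) (hW : x ∈ W ↔ y ∉ W) : c ≤ pathMetric b D x y := by
  refine le_csInf ⟨_, step_mem_pathLengths hxy⟩ ?_
  rintro L ⟨K, p, rfl, rfl, hpos, rfl⟩
  obtain ⟨j, hj, hcross⟩ := exists_step_crossing W p hW
  calc c ≤ √(min (1 / D (p j)) (1 / D (p (j + 1)))) := hc _ _ (hpos j hj) hcross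
    _ ≤ _ := single_le_sum (f := fun i => √(min (1 / D (p i)) (1 / D (p (i + 1)))))
        (fun i _ => Real.sqrt_nonneg _) (mem_range.mpr hj)

end PathMetric

namespace AntiTree

variable {s : ℕ → ℕ}

instance : DecidableEq (AntiTree s) := inferInstanceAs (DecidableEq (Σ k, Fin (s k)))

variable (s) in
def sphere (j : ℕ) : Finset (AntiTree s) :=
  ({j} : Finset ℕ).sigma fun _ => univ

lemma mem_sphere {j : ℕ} {x : AntiTree s} : x ∈ sphere s j ↔ x.1 = j :=
  mem_sigma.trans (by simp)

lemma card_sphere (j : ℕ) : #(sphere s j) = s j :=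
  (card_sigma _ _).trans (by simp)

lemma wt_pos_iff {x y : AntiTree s} : 0 < wt s x y ↔ x.1 + 1 = y.1 ∨ y.1 + 1 = x.1 := by
  unfold wt; split <;> simp_all

lemma wt_nonneg (x y : AntiTree s) : 0 ≤ wt s x y := by
  unfold wt; split_ifs <;> norm_num

lemma wt_le_one (x y : AntiTree s) : wt s x y ≤ 1 := by
  unfold wt; split_ifs <;> norm_num

lemma deg_eq_sum (x : AntiTree s) :
    Deg s x = ∑ y ∈ sphere s (x.1 - 1) ∪ sphere s (x.1 + 1), wt s x y := by
  refine tsum_eq_sum fun y hy => if_neg fun hadj => hy ?_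
  rw [mem_union, mem_sphere, mem_sphere]
  omega

lemma deg_le (x : AntiTree s) : Deg s x ≤ s (x.1 - 1) + s (x.1 + 1) := by
  rw [deg_eq_sum]
  calc ∑ y ∈ sphere s (x.1 - 1) ∪ sphere s (x.1 + 1), wt s x y
      ≤ #(sphere s (x.1 - 1) ∪ sphere s (x.1 + 1)) := by
        simpa using sum_le_sum fun y _ => wt_le_one x y
    _ ≤ s (x.1 - 1) + s (x.1 + 1) := by
        exact_mod_cast (card_union_le _ _).trans_eq (by rw [card_sphere, card_sphere])

lemma le_deg (x : AntiTree s) : (s (x.1 + 1) : ℝ) ≤ Deg s x := by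
  have hupper : ∑ y ∈ sphere s (x.1 + 1), wt s x y = s (x.1 + 1) := by
    rw [sum_congr rfl fun y hy => ?_, sum_const, card_sphere, nsmul_one]
    exact if_pos (Or.inl (mem_sphere.mp hy).symm)
  rw [deg_eq_sum, ← hupper]
  exact sum_le_sum_of_subset_of_nonneg subset_union_right fun y _ _ => wt_nonneg x y

variable (s) in
def combBall (k : ℕ) : Set (AntiTree s) := {x | x.1 ≤ k}

variable (s) in
def boundaryPairs (k : ℕ) : Finset (AntiTree s × AntiTree s) :=
  sphere s k ×ˢ sphere s (k + 1) ∪ sphere s (k + 1) ×ˢ sphere s k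

lemma mem_boundaryPairs {k : ℕ} {p : AntiTree s × AntiTree s} :
    p ∈ boundaryPairs s k ↔ p.1.1 = k ∧ p.2.1 = k + 1 ∨ p.1.1 = k + 1 ∧ p.2.1 = k := by
  simp only [boundaryPairs, mem_union, mem_product, mem_sphere]

lemma card_boundaryPairs (k : ℕ) : #(boundaryPairs s k) = 2 * (s k * s (k + 1)) := by
  rw [boundaryPairs, card_union_of_disjoint, card_product, card_product, card_sphere,
    card_sphere]
  · ring
  · refine disjoint_left.mpr fun p hp hp' => ?_
    rw [mem_product, mem_sphere, mem_sphere] at hp hp'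
    omega

lemma mem_boundaryPairs_iff_crossing {k : ℕ} {p : AntiTree s × AntiTree s} :
    p ∈ boundaryPairs s k ↔ 0 < wt s p.1 p.2 ∧ (p.1 ∈ combBall s k ↔ p.2 ∉ combBall s k) := by
  rw [mem_boundaryPairs, wt_pos_iff]
  simp only [combBall, Set.mem_ofPred_eq]
  omega

lemma boundarySum_combBall (ρ : AntiTree s → AntiTree s → ℝ) (k : ℕ) :
    boundarySum (wt s) ρ (combBall s k) = ∑ p ∈ boundaryPairs s k, ρ p.1 p.2 := by
  rw [sum_eq_tsum_indicator, boundarySum]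
  congr 1 with p
  by_cases hp : p ∈ boundaryPairs s k
  · obtain ⟨hwt, hW⟩ := mem_boundaryPairs_iff_crossing.mp hp
    rw [Set.indicator_of_mem (by tauto), Set.indicator_of_mem (mem_coe.mpr hp), wt,
      if_pos (wt_pos_iff.mp hwt), one_mul]
  · rw [Set.indicator_of_notMem (mt mem_coe.mp hp), Set.indicator_apply_eq_zero]
    intro (hW : (_ ∧ _) ∨ (_ ∧ _))
    have hwt : ¬0 < wt s p.1 p.2 := fun hwt =>
      hp (mem_boundaryPairs_iff_crossing.mpr ⟨hwt, by tauto⟩)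
    rw [le_antisymm (not_lt.mp hwt) (wt_nonneg _ _), zero_mul]

lemma rho_le_of_mem_boundaryPairs {k : ℕ} {p : AntiTree s × AntiTree s}
    (hp : p ∈ boundaryPairs s k) : rho s p.1 p.2 ≤ √(1 / Deg s p.1) :=
  (pathMetric_le_of_pos (mem_boundaryPairs_iff_crossing.mp hp).1).trans
    (Real.sqrt_le_sqrt (min_le_left _ _))

lemma le_rho_of_mem_boundaryPairs {k : ℕ} {c : ℝ}
    (hc : ∀ p ∈ boundaryPairs s k, c ≤ √(min (1 / Deg s p.1) (1 / Deg s p.2)))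
    {p : AntiTree s × AntiTree s} (hp : p ∈ boundaryPairs s k) : c ≤ rho s p.1 p.2 :=
  le_pathMetric_of_forall_boundary (combBall s k)
    (fun z w hzw hW => hc (z, w) (mem_boundaryPairs_iff_crossing.mpr ⟨hzw, hW⟩))
    (mem_boundaryPairs_iff_crossing.mp hp).1 (mem_boundaryPairs_iff_crossing.mp hp).2

lemma rho_mem_Icc_of_mem_boundaryPairs {k : ℕ} {a A : ℝ} (ha : 0 < a)
    (hdeg : ∀ x : AntiTree s, x.1 = k ∨ x.1 = k + 1 → a ^ 2 ≤ Deg s x ∧ Deg s x ≤ A ^ 2)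
    {p : AntiTree s × AntiTree s} (hp : p ∈ boundaryPairs s k) :
    rho s p.1 p.2 ∈ Set.Icc (1 / A) (1 / a) := by
  have hdeg_pos : ∀ x : AntiTree s, x.1 = k ∨ x.1 = k + 1 → 0 < Deg s x :=
    fun x hx => (pow_pos ha 2).trans_le (hdeg x hx).1
  refine ⟨le_rho_of_mem_boundaryPairs (fun q hq => ?_) hp, ?_⟩
  · have hq' := mem_boundaryPairs.mp hq
    calc 1 / A ≤ |1 / A| := le_abs_self _
      _ = √((1 / A) ^ 2) := (Real.sqrt_sq_eq_abs _).symm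
      _ ≤ √(min (1 / Deg s q.1) (1 / Deg s q.2)) := by
        rw [div_pow, one_pow]
        gcongr
        refine le_min ?_ ?_ <;> gcongr
        exacts [hdeg_pos _ (by omega), (hdeg _ (by omega)).2, hdeg_pos _ (by omega),
          (hdeg _ (by omega)).2]
  · have hp' := mem_boundaryPairs.mp hp
    calc rho s p.1 p.2 ≤ √(1 / Deg s p.1) := rho_le_of_mem_boundaryPairs hp
      _ ≤ √((1 / a) ^ 2) := by
        rw [div_pow, one_pow]
        gcongr
        exact (hdeg _ (by omega)).1
      _ = 1 / a := Real.sqrt_sq (by positivity)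

lemma boundarySum_combBall_mem_Icc {k : ℕ} {a A : ℝ} (ha : 0 < a) (hA : 0 < A)
    (hs : ∀ j, k ≤ j + 1 → j ≤ k + 2 → a ^ 2 ≤ s j ∧ (s j : ℝ) ≤ A ^ 2) :
    boundarySum (wt s) (rho s) (combBall s k) ∈ Set.Icc (a ^ 4 / A) (2 * A ^ 4 / a) := by
  have hdeg : ∀ x : AntiTree s, x.1 = k ∨ x.1 = k + 1 →
      a ^ 2 ≤ Deg s x ∧ Deg s x ≤ (2 * A) ^ 2 := by
    intro x hx
    refine ⟨(hs _ (by omega) (by omega)).1.trans (le_deg x), (deg_le x).trans ?_⟩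
    linarith [(hs (x.1 - 1) (by omega) (by omega)).2, (hs (x.1 + 1) (by omega) (by omega)).2]
  have hrho := fun p (hp : p ∈ boundaryPairs s k) => rho_mem_Icc_of_mem_boundaryPairs ha hdeg hp
  have hcard : 2 * a ^ 4 ≤ #(boundaryPairs s k) ∧ (#(boundaryPairs s k) : ℝ) ≤ 2 * A ^ 4 := by
    obtain ⟨hk, hk'⟩ := hs k (by omega) (by omega)
    obtain ⟨hk1, hk1'⟩ := hs (k + 1) (by omega) (by omega)
    rw [card_boundaryPairs]
    push_cast
    constructor <;> nlinarith [sq_nonneg a, sq_nonneg A]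
  rw [boundarySum_combBall]
  constructor
  · calc a ^ 4 / A = 2 * a ^ 4 * (1 / (2 * A)) := by field_simp
      _ ≤ #(boundaryPairs s k) * (1 / (2 * A)) := by gcongr; exact hcard.1
      _ ≤ _ := by simpa using card_nsmul_le_sum _ _ _ fun p hp => (hrho p hp).1
  · calc _ ≤ #(boundaryPairs s k) * (1 / a) := by
          simpa using sum_le_card_nsmul _ _ _ fun p hp => (hrho p hp).2
      _ ≤ 2 * A ^ 4 * (1 / a) := by gcongr; exact hcard.2
      _ = 2 * A ^ 4 / a := by ring

end AntiTree

lemma rpow_div_two_le_gammaSphere {γ : ℝ} (hγ : 0 ≤ γ) {k j : ℕ} (hj : k ≤ j + 1) :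
    (k : ℝ) ^ γ / 2 ≤ gammaSphere γ j := by
  have hone : (1 : ℝ) ≤ ((j : ℝ) + 1) ^ γ := Real.one_le_rpow (by simp) hγ
  calc (k : ℝ) ^ γ / 2 ≤ ((j : ℝ) + 1) ^ γ / 2 := by gcongr; exact_mod_cast hj
    _ ≤ gammaSphere γ j := (Nat.div_two_lt_floor hone).le

lemma gammaSphere_le_rpow {γ : ℝ} (hγ0 : 0 ≤ γ) (hγ2 : γ ≤ 2) {k j : ℕ} (hj : j + 1 ≤ 4 * k) :
    (gammaSphere γ j : ℝ) ≤ 16 * (k : ℝ) ^ γ := by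
  calc (gammaSphere γ j : ℝ) ≤ ((j : ℝ) + 1) ^ γ := Nat.floor_le (by positivity)
    _ ≤ (4 * (k : ℝ)) ^ γ := by gcongr; exact_mod_cast hj
    _ = (4 : ℝ) ^ γ * (k : ℝ) ^ γ := Real.mul_rpow (by norm_num) k.cast_nonneg
    _ ≤ (4 : ℝ) ^ (2 : ℝ) * (k : ℝ) ^ γ := by gcongr; norm_num
    _ = 16 * (k : ℝ) ^ γ := by norm_num

/-- **Boundary measure of combinatorial balls in anti-trees.**
For `γ ∈ [0,2)` and the `γ`-anti-tree with counting measure `m ≡ 1`, intrinsic degree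
path metric `ρ` and combinatorial balls `A_k = S₀ ∪ … ∪ S_k`, there is `C ≥ 1` such that
for all `k ≥ 1`: `C⁻¹ k^{3γ/2} ≤ (bρ)(∂A_k) ≤ C k^{3γ/2}`. -/
theorem gammaAntiTree_boundary (γ : ℝ) (hγ0 : 0 ≤ γ) (hγ2 : γ < 2) :
    ∃ C : ℝ, 1 ≤ C ∧ ∀ k : ℕ, 1 ≤ k →
      C⁻¹ * (k : ℝ) ^ (3 * γ / 2) ≤
          boundarySum (AntiTree.wt (gammaSphere γ)) (AntiTree.rho (gammaSphere γ))
            {x : AntiTree (gammaSphere γ) | x.1 ≤ k} ∧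
      boundarySum (AntiTree.wt (gammaSphere γ)) (AntiTree.rho (gammaSphere γ))
            {x : AntiTree (gammaSphere γ) | x.1 ≤ k} ≤
          C * (k : ℝ) ^ (3 * γ / 2) := by
  refine ⟨1024, by norm_num, fun k hk => ?_⟩
  have hk0 : (0 : ℝ) < k := by exact_mod_cast hk
  set r := (k : ℝ) ^ (γ / 2)
  have hr : 0 < r := by positivity
  have hr2 : (k : ℝ) ^ γ = r ^ 2 := by rw [← Real.rpow_mul_natCast hk0.le]; norm_num
  have hr3 : (k : ℝ) ^ (3 * γ / 2) = r ^ 3 := by rw [← Real.rpow_mul_natCast hk0.le]; ring_nf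
  obtain ⟨hlower, hupper⟩ := AntiTree.boundarySum_combBall_mem_Icc (s := gammaSphere γ) (k := k)
    (a := r / 2) (A := 4 * r) (by positivity) (by positivity) fun j hj hj' =>
      ⟨by linarith [rpow_div_two_le_gammaSphere hγ0 hj, hr2],
        by linarith [gammaSphere_le_rpow hγ0 hγ2.le (by omega : j + 1 ≤ 4 * k), hr2]⟩
  rw [hr3]
  constructor
  · calc 1024⁻¹ * r ^ 3 ≤ 64⁻¹ * r ^ 3 := by gcongr; norm_num
      _ = (r / 2) ^ 4 / (4 * r) := by field_simp; ring
      _ ≤ _ := hlower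
  · calc _ ≤ 2 * (4 * r) ^ 4 / (r / 2) := hupper
      _ = 1024 * r ^ 3 := by field_simp; ring
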